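/- arXiv:2312.01944 — 2 statements merged into one kernel-verified Lean document; each statement's English description precedes it below -/
import Mathlib

section
/- Let $N, p \ge 1$ and $s_1, \ldots, s_p \ge 0$ be integers. For $j = 1, \ldots, p$ let $A_j = \mathrm{diag}(\alpha_{1,j}, \ldots, \alpha_{N,j}) + \sum_{r=1}^{s_j} \beta_{j,r} W^{(r)}$, where $\alpha_{i,j}, \beta_{j,r} \in \mathbb{R}$ and each $W^{(r)}$ is an $N \times N$ real matrix with non-negative entries whose row sums satisfy $\sum_{m=1}^{N} [W^{(r)}]_{l,m} \le 1$ for every row $l$. Suppose $\sum_{j=1}^{p} \big( |\alpha_{i,j}| + \sum_{r=1}^{s_j} |\beta_{j,r}| \big) < 1$ for every $i = 1, \ldots, N$. Then for every complex number $z$ with $|z| \le 1$, $\det\big( I_N - \sum_{j=1}^{p} A_j z^j \big) \ne 0$. -/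
open scoped Matrix

/-- Let `A j = diag (α · j) + ∑_{r < s j} β j r • W r` with `W r`
non-negative matrices whose row sums are at most one. If
`∑_j (|α i j| + ∑_{r < s j} |β j r|) < 1` for every node `i`, then
`det (I - ∑_j z^(j+1) • A j) ≠ 0` for every complex `z` with `|z| ≤ 1`
(the roots of the characteristic polynomial of the network autoregression lie
strictly outside the closed unit disc). -/
theorem gnari_char_poly_no_root_in_unit_disc (N p : ℕ) (hN : 1 ≤ N) (hp : 1 ≤ p)
    (s : Fin p → ℕ) (α : Fin N → Fin p → ℝ) (β : Fin p → ℕ → ℝ)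
    (W : ℕ → Matrix (Fin N) (Fin N) ℝ)
    (hWnonneg : ∀ j : Fin p, ∀ r ∈ Finset.range (s j), ∀ l m, 0 ≤ W r l m)
    (hWrow : ∀ j : Fin p, ∀ r ∈ Finset.range (s j), ∀ l, ∑ m, W r l m ≤ 1)
    (A : Fin p → Matrix (Fin N) (Fin N) ℝ)
    (hA : ∀ j, A j = Matrix.diagonal (fun i => α i j)
        + ∑ r ∈ Finset.range (s j), β j r • W r)
    (hpar : ∀ i : Fin N,
      ∑ j : Fin p, (|α i j| + ∑ r ∈ Finset.range (s j), |β j r|) < 1)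
    (z : ℂ) (hz : ‖z‖ ≤ 1) :
    Matrix.det (1 - ∑ j : Fin p, z ^ (j.1 + 1) • (A j).map (fun a => (a : ℂ))) ≠ 0 := by
  -- row sums of absolute values of A j
  have hrow : ∀ (j : Fin p) (i : Fin N),
      ∑ k, |A j i k| ≤ |α i j| + ∑ r ∈ Finset.range (s j), |β j r| := by
    intro j i
    have hAentry : ∀ k, |A j i k| ≤
        |Matrix.diagonal (fun i => α i j) i k|
          + ∑ r ∈ Finset.range (s j), |β j r| * W r i k := by
      intro k
      rw [hA]
      simp only [Matrix.add_apply, Matrix.sum_apply, Matrix.smul_apply, smul_eq_mul]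
      refine le_trans (abs_add_le _ _) ?_
      gcongr
      refine le_trans (Finset.abs_sum_le_sum_abs _ _) ?_
      apply Finset.sum_le_sum
      intro r hr
      rw [abs_mul, abs_of_nonneg (hWnonneg j r hr i k)]
    calc ∑ k, |A j i k|
        ≤ ∑ k, (|Matrix.diagonal (fun i => α i j) i k|
            + ∑ r ∈ Finset.range (s j), |β j r| * W r i k) :=
          Finset.sum_le_sum fun k _ => hAentry k
      _ = |α i j| + ∑ r ∈ Finset.range (s j), |β j r| * ∑ k, W r i k := by
          rw [Finset.sum_add_distrib]
          congr 1
          · rw [Finset.sum_eq_single i]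
            · simp [Matrix.diagonal_apply_eq]
            · intro b _ hb
              simp [Matrix.diagonal_apply_ne' _ hb]
            · simp
          · rw [Finset.sum_comm]
            simp [Finset.mul_sum]
      _ ≤ |α i j| + ∑ r ∈ Finset.range (s j), |β j r| * 1 := by
          gcongr with r hr
          exact hWrow j r hr i
      _ = |α i j| + ∑ r ∈ Finset.range (s j), |β j r| := by simp
  intro hdet
  obtain ⟨v, hv0, hv⟩ := Matrix.exists_mulVec_eq_zero_iff.mpr hdet
  -- pick index of maximal norm
  obtain ⟨i, -, hi⟩ := Finset.exists_max_image Finset.univ (fun k => ‖v k‖)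
    ⟨⟨0, hN⟩, Finset.mem_univ _⟩
  have hvi : 0 < ‖v i‖ := by
    obtain ⟨k, hk⟩ := Function.ne_iff.mp hv0
    have := hi k (Finset.mem_univ k)
    have : 0 < ‖v k‖ := by simpa [norm_pos_iff] using hk
    linarith [hi k (Finset.mem_univ k)]
  -- v i = ∑_j z^(j+1) * ∑_k (A j i k) * v k
  have hkey : v i = ∑ j : Fin p, z ^ (j.1 + 1) * ∑ k, (A j i k : ℂ) * v k := by
    have h1 := congrFun hv i
    simp only [Matrix.sub_mulVec, Matrix.one_mulVec, Pi.sub_apply, Pi.zero_apply,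
      sub_eq_zero] at h1
    rw [h1]
    simp only [Matrix.mulVec, dotProduct, Matrix.sum_apply, Matrix.smul_apply,
      Matrix.map_apply, smul_eq_mul, Finset.sum_mul]
    rw [Finset.sum_comm]
    simp [Finset.mul_sum, mul_assoc]
  have hbound : ‖v i‖ ≤
      (∑ j : Fin p, (|α i j| + ∑ r ∈ Finset.range (s j), |β j r|)) * ‖v i‖ := by
    calc ‖v i‖ = ‖∑ j : Fin p, z ^ (j.1 + 1) * ∑ k, (A j i k : ℂ) * v k‖ := by rw [hkey]
      _ ≤ ∑ j : Fin p, ‖z ^ (j.1 + 1) * ∑ k, (A j i k : ℂ) * v k‖ :=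
          norm_sum_le _ _
      _ ≤ ∑ j : Fin p, (|α i j| + ∑ r ∈ Finset.range (s j), |β j r|) * ‖v i‖ := by
          apply Finset.sum_le_sum
          intro j _
          rw [norm_mul]
          have hz1 : ‖z ^ (j.1 + 1)‖ ≤ 1 := by
            rw [norm_pow]; exact pow_le_one₀ (norm_nonneg _) hz
          calc ‖z ^ (j.1 + 1)‖ * ‖∑ k, (A j i k : ℂ) * v k‖
              ≤ 1 * ‖∑ k, (A j i k : ℂ) * v k‖ := by
                gcongr
            _ = ‖∑ k, (A j i k : ℂ) * v k‖ := one_mul _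
            _ ≤ ∑ k, ‖(A j i k : ℂ) * v k‖ := norm_sum_le _ _
            _ ≤ ∑ k, |A j i k| * ‖v i‖ := by
                apply Finset.sum_le_sum
                intro k _
                rw [norm_mul, Complex.norm_real, Real.norm_eq_abs]
                gcongr
                exact hi k (Finset.mem_univ k)
            _ = (∑ k, |A j i k|) * ‖v i‖ := by rw [Finset.sum_mul]
            _ ≤ (|α i j| + ∑ r ∈ Finset.range (s j), |β j r|) * ‖v i‖ := by
                gcongr
                exact hrow j i
      _ = (∑ j : Fin p, (|α i j| + ∑ r ∈ Finset.range (s j), |β j r|)) * ‖v i‖ := by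
          rw [Finset.sum_mul]
  have := hpar i
  nlinarith [hbound, hvi, this]
end

section
/- Let $N, p \ge 1$ and $s_1, \ldots, s_p \ge 0$ be integers. For $j = 1, \ldots, p$ let $A_j = \mathrm{diag}(\alpha_{1,j}, \ldots, \alpha_{N,j}) + \sum_{r=1}^{s_j} \beta_{j,r} W^{(r)}$, where $\alpha_{i,j}, \beta_{j,r} \in \mathbb{R}$ and each $W^{(r)}$ is an $N \times N$ real matrix with non-negative entries whose row sums are at most one. Define the $Np \times Np$ block companion matrix $A$ whose first block row is $(A_1, A_2, \ldots, A_p)$, whose subdiagonal blocks are $N \times N$ identity matrices, and whose remaining blocks are zero. If $\sum_{j=1}^{p} \big( |\alpha_{i,j}| + \sum_{r=1}^{s_j} |\beta_{j,r}| \big) < 1$ for every $i = 1, \ldots, N$, then every complex eigenvalue $\mu$ of $A$ satisfies $|\mu| < 1$; equivalently, the spectral radius of $A$ is strictly less than one. -/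
open scoped Matrix

/-- Let `A j = diag (α · j) + ∑_{r < s j} β j r • W r` with `W r`
non-negative matrices whose row sums are at most one, and let `Acomp` be the `Np × Np`
block companion matrix whose first block row is `(A 0, A 1, …, A (p-1))`, whose
subdiagonal blocks are identity matrices and whose other blocks vanish (rows and columns
indexed by `Fin p × Fin N`, the first component being the block index). If
`∑_j (|α i j| + ∑_{r < s j} |β j r|) < 1` for every node `i`, then every complex
eigenvalue `μ` of `Acomp` satisfies `‖μ‖ < 1`, i.e. the spectral radius of `Acomp` is
strictly less than one. -/
theorem gnari_companion_spectral_radius_lt_one (N p : ℕ) (hN : 1 ≤ N) (hp : 1 ≤ p)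
    (s : Fin p → ℕ) (α : Fin N → Fin p → ℝ) (β : Fin p → ℕ → ℝ)
    (W : ℕ → Matrix (Fin N) (Fin N) ℝ)
    (hWnonneg : ∀ j : Fin p, ∀ r ∈ Finset.range (s j), ∀ l m, 0 ≤ W r l m)
    (hWrow : ∀ j : Fin p, ∀ r ∈ Finset.range (s j), ∀ l, ∑ m, W r l m ≤ 1)
    (A : Fin p → Matrix (Fin N) (Fin N) ℝ)
    (hA : ∀ j, A j = Matrix.diagonal (fun i => α i j)
        + ∑ r ∈ Finset.range (s j), β j r • W r)
    (Acomp : Matrix (Fin p × Fin N) (Fin p × Fin N) ℝ)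
    (hAcomp : ∀ (bi bj : Fin p) (l m : Fin N),
      Acomp (bi, l) (bj, m) =
        if bi.1 = 0 then A bj l m
        else if bi.1 = bj.1 + 1 ∧ l = m then 1 else 0)
    (hpar : ∀ i : Fin N,
      ∑ j : Fin p, (|α i j| + ∑ r ∈ Finset.range (s j), |β j r|) < 1) :
    ∀ μ ∈ spectrum ℂ (Acomp.map (fun a => (a : ℂ))), ‖μ‖ < 1 := by
  intro μ hμ
  by_contra hge
  push_neg at hge
  have hμ0 : μ ≠ 0 := by
    intro h; rw [h, norm_zero] at hge; linarith
  set M : Matrix (Fin p × Fin N) (Fin p × Fin N) ℂ := Acomp.map (fun a => (a : ℂ)) with hMdef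
  rw [spectrum.mem_iff] at hμ
  have hdet : (algebraMap ℂ (Matrix (Fin p × Fin N) (Fin p × Fin N) ℂ) μ - M).det = 0 := by
    by_contra hd
    exact hμ ((Matrix.isUnit_iff_isUnit_det _).mpr (isUnit_iff_ne_zero.mpr hd))
  obtain ⟨v, hv0, hv⟩ := Matrix.exists_mulVec_eq_zero_iff.mpr hdet
  have heig : ∀ x, ∑ y, M x y * v y = μ * v x := by
    intro x
    have h1 := congrFun hv x
    rw [Matrix.sub_mulVec] at h1
    have h2 : (algebraMap ℂ (Matrix (Fin p × Fin N) (Fin p × Fin N) ℂ) μ).mulVec v x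
        = μ * v x := by
      simp [Algebra.algebraMap_eq_smul_one, Matrix.smul_mulVec, Matrix.one_mulVec]
    have h3 : M.mulVec v x = μ * v x := by
      have h4 := sub_eq_zero.mp h1
      rw [← h4, h2]
    simpa [Matrix.mulVec, dotProduct] using h3
  have hp0 : 0 < p := hp
  -- chain relation between consecutive blocks
  have hchain : ∀ (k : ℕ) (hk : k + 1 < p) (l : Fin N),
      v (⟨k, Nat.lt_of_succ_lt hk⟩, l) = μ * v (⟨k + 1, hk⟩, l) := by
    intro k hk l
    have h := heig (⟨k + 1, hk⟩, l)
    have hsum : ∑ y, M (⟨k + 1, hk⟩, l) y * v y = v (⟨k, Nat.lt_of_succ_lt hk⟩, l) := by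
      rw [Finset.sum_eq_single_of_mem ((⟨k, Nat.lt_of_succ_lt hk⟩ : Fin p), l)
          (Finset.mem_univ _)]
      · rw [hMdef, Matrix.map_apply, hAcomp]
        norm_num
      · rintro ⟨bj, m⟩ _ hne
        rw [hMdef, Matrix.map_apply, hAcomp]
        have hcond : ¬(k + 1 = bj.1 + 1 ∧ l = m) := by
          rintro ⟨h1, h2⟩
          exact hne (by
            refine Prod.ext ?_ h2.symm
            exact Fin.ext (Nat.succ_injective h1).symm)
        rw [if_neg hcond]
        simp
    rw [hsum] at h
    exact h
  -- block 0 dominates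
  have hpow : ∀ (k : ℕ) (hk : k < p) (l : Fin N),
      v (⟨0, hp0⟩, l) = μ ^ k * v (⟨k, hk⟩, l) := by
    intro k
    induction k with
    | zero => intro hk l; simp
    | succ k ih =>
      intro hk l
      have hk' : k < p := Nat.lt_of_succ_lt hk
      rw [ih hk' l, hchain k hk l, pow_succ]
      ring
  have hvle : ∀ (k : Fin p) (m : Fin N), ‖v (k, m)‖ ≤ ‖v (⟨0, hp0⟩, m)‖ := by
    rintro ⟨k, hk⟩ m
    have h := hpow k hk m
    have : ‖v (⟨0, hp0⟩, m)‖ = ‖μ‖ ^ k * ‖v (⟨k, hk⟩, m)‖ := by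
      rw [h, norm_mul, norm_pow]
    rw [this]
    exact le_mul_of_one_le_left (norm_nonneg _) (one_le_pow₀ hge)
  have hex : ∃ l, v (⟨0, hp0⟩, l) ≠ 0 := by
    by_contra hall
    push_neg at hall
    apply hv0
    funext x
    obtain ⟨⟨k, hk⟩, m⟩ := x
    have h := hpow k hk m
    rw [hall m] at h
    have := (mul_eq_zero.mp h.symm).resolve_left (pow_ne_zero k hμ0)
    simpa using this
  haveI : Nonempty (Fin N) := ⟨⟨0, hN⟩⟩
  obtain ⟨l0, -, hl0⟩ := Finset.exists_max_image Finset.univ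
    (fun l => ‖v (⟨0, hp0⟩, l)‖) Finset.univ_nonempty
  set C := ‖v (⟨0, hp0⟩, l0)‖ with hCdef
  have hC : 0 < C := by
    obtain ⟨l, hl⟩ := hex
    calc (0 : ℝ) < ‖v (⟨0, hp0⟩, l)‖ := norm_pos_iff.mpr hl
      _ ≤ C := hl0 l (Finset.mem_univ _)
  -- row sum bound for A j
  have hrow : ∀ j : Fin p, ∑ m, |A j l0 m| ≤ |α l0 j| + ∑ r ∈ Finset.range (s j), |β j r| := by
    intro j
    have hent : ∀ m, |A j l0 m| ≤ (if l0 = m then |α l0 j| else 0)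
        + ∑ r ∈ Finset.range (s j), |β j r| * W r l0 m := by
      intro m
      rw [hA]
      simp only [Matrix.add_apply, Matrix.diagonal_apply, Matrix.sum_apply,
        Matrix.smul_apply, smul_eq_mul]
      refine (abs_add_le _ _).trans (add_le_add ?_ ?_)
      · split <;> simp
      · refine (Finset.abs_sum_le_sum_abs _ _).trans ?_
        refine Finset.sum_le_sum fun r hr => ?_
        rw [abs_mul, abs_of_nonneg (hWnonneg j r hr l0 m)]
    calc ∑ m, |A j l0 m|
        ≤ ∑ m, ((if l0 = m then |α l0 j| else 0)
          + ∑ r ∈ Finset.range (s j), |β j r| * W r l0 m) :=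
          Finset.sum_le_sum fun m _ => hent m
      _ = |α l0 j| + ∑ r ∈ Finset.range (s j), |β j r| * ∑ m, W r l0 m := by
          rw [Finset.sum_add_distrib, Finset.sum_ite_eq Finset.univ l0,
            if_pos (Finset.mem_univ _), Finset.sum_comm]
          simp [Finset.mul_sum]
      _ ≤ |α l0 j| + ∑ r ∈ Finset.range (s j), |β j r| * 1 := by
          gcongr with r hr
          exact hWrow j r hr l0
      _ = |α l0 j| + ∑ r ∈ Finset.range (s j), |β j r| := by simp
  -- the main estimate at row (0, l0)
  have hmain := heig (⟨0, hp0⟩, l0)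
  have hMe0 : ∀ (bj : Fin p) (m : Fin N),
      M (⟨0, hp0⟩, l0) (bj, m) = ((A bj l0 m : ℝ) : ℂ) := by
    intro bj m
    rw [hMdef, Matrix.map_apply, hAcomp]
    simp
  have hnorm : ‖μ‖ * C ≤ (∑ j : Fin p, (|α l0 j| + ∑ r ∈ Finset.range (s j), |β j r|)) * C := by
    have h1 : ‖μ‖ * C = ‖∑ y, M (⟨0, hp0⟩, l0) y * v y‖ := by
      rw [hmain, norm_mul]
    rw [h1]
    calc ‖∑ y, M (⟨0, hp0⟩, l0) y * v y‖
        ≤ ∑ y, ‖M (⟨0, hp0⟩, l0) y * v y‖ := norm_sum_le _ _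
      _ = ∑ bj : Fin p, ∑ m : Fin N, |A bj l0 m| * ‖v (bj, m)‖ := by
          rw [Fintype.sum_prod_type]
          refine Finset.sum_congr rfl fun bj _ => Finset.sum_congr rfl fun m _ => ?_
          rw [hMe0, norm_mul, Complex.norm_real, Real.norm_eq_abs]
      _ ≤ ∑ bj : Fin p, ∑ m : Fin N, |A bj l0 m| * C := by
          gcongr with bj _ m _
          exact le_trans (hvle bj m) (hl0 m (Finset.mem_univ _))
      _ = ∑ bj : Fin p, (∑ m : Fin N, |A bj l0 m|) * C := by
          simp [Finset.sum_mul]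
      _ ≤ ∑ bj : Fin p, (|α l0 bj| + ∑ r ∈ Finset.range (s bj), |β bj r|) * C := by
          gcongr with bj _
          exact hrow bj
      _ = (∑ j : Fin p, (|α l0 j| + ∑ r ∈ Finset.range (s j), |β j r|)) * C := by
          rw [Finset.sum_mul]
  have hlt : (∑ j : Fin p, (|α l0 j| + ∑ r ∈ Finset.range (s j), |β j r|)) * C < 1 * C :=
    mul_lt_mul_of_pos_right (hpar l0) hC
  have : ‖μ‖ * C < 1 * C := lt_of_le_of_lt hnorm hlt
  have : ‖μ‖ < 1 := lt_of_mul_lt_mul_right this hC.le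
  linarith
end
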